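/- arXiv:2512.16805 — 5 statements merged into one kernel-verified Lean document; each statement's English description precedes it below -/
import Mathlib

section
/- Let (U, 𝒮) be a SetCover instance with finite universe U and with 𝒮 = {s_1, …, s_m} an enumeration of its m distinct sets. Let e_1, …, e_{m+1} be m+1 distinct fresh elements not in U, let E = {e_1, …, e_{m+1}}, and define the instance I' with universe U' = U ∪ E and family 𝒮' = { s_i ∪ {e_i} : i ∈ [m] } ∪ {E}. Then every cover of I' contains the set E, and OPT(I') = OPT(U, 𝒮) + 1. -/
open Finset

variable {α : Type*} [DecidableEq α]

/-- `C` is a cover of the set-cover instance with universe `U` and set family `F`: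
it is a subfamily of `F` whose union is `U`. -/
def IsCover (U : Finset α) (F : Finset (Finset α)) (C : Finset (Finset α)) : Prop :=
  C ⊆ F ∧ C.sup id = U

/-- `coverOPT U F` is the minimum cardinality of a cover of the instance `(U, F)`. -/
noncomputable def coverOPT (U : Finset α) (F : Finset (Finset α)) : ℕ :=
  sInf {n | ∃ C, IsCover U F C ∧ C.card = n}

/-- Let `𝒮 = {s_1, …, s_m}` (distinct sets, with union `U`), let `e_1, …, e_{m+1}` be
distinct fresh elements, `E = {e_1, …, e_{m+1}}`, and let `I'` be the instance with
universe `U ∪ E` and family `{s_i ∪ {e_i} : i ∈ [m]} ∪ {E}`.  Then every cover of `I'`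
contains `E`, and `OPT(I') = OPT(U, 𝒮) + 1`. -/
theorem stmt5 (m : ℕ) (s : Fin m → Finset α) (hs : Function.Injective s)
    (U : Finset α) (hU : Finset.univ.sup s = U)
    (e : Fin (m + 1) → α) (he : Function.Injective e) (hfresh : ∀ i, e i ∉ U) :
    (∀ C, IsCover (U ∪ Finset.univ.image e)
        (insert (Finset.univ.image e)
          (Finset.univ.image fun i : Fin m => insert (e i.castSucc) (s i))) C →
        Finset.univ.image e ∈ C) ∧
    coverOPT (U ∪ Finset.univ.image e)
        (insert (Finset.univ.image e)
          (Finset.univ.image fun i : Fin m => insert (e i.castSucc) (s i))) =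
      coverOPT U (Finset.univ.image s) + 1 := by
  classical
  set E : Finset α := Finset.univ.image e with hE
  set s' : Fin m → Finset α := fun i => insert (e i.castSucc) (s i) with hs'def
  set F' : Finset (Finset α) := insert E (Finset.univ.image s') with hF'
  have hsub : ∀ i, s i ⊆ U := fun i => hU ▸ Finset.le_sup (Finset.mem_univ i)
  have hlastE : e (Fin.last m) ∈ E := Finset.mem_image_of_mem e (Finset.mem_univ _)
  have hlast_not : ∀ i : Fin m, e (Fin.last m) ∉ s' i := by
    intro i hmem
    rcases Finset.mem_insert.mp hmem with h | h
    · exact (Fin.castSucc_lt_last i).ne' (he h)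
    · exact hfresh _ (hsub i h)
  have hEnot : ∀ i : Fin m, s' i ≠ E := fun i h => hlast_not i (h ▸ hlastE)
  have hs'inj : Function.Injective s' := by
    intro i j hij
    have hmem : e i.castSucc ∈ s' j := hij ▸ Finset.mem_insert_self _ _
    rcases Finset.mem_insert.mp hmem with h | h
    · exact Fin.castSucc_injective _ (he h)
    · exact absurd (hsub j h) (hfresh _)
  -- Claim 1 : every cover of I' contains E
  have claim1 : ∀ C, IsCover (U ∪ E) F' C → E ∈ C := by
    rintro C ⟨hCF, hCsup⟩
    have hx : e (Fin.last m) ∈ C.sup id := by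
      rw [hCsup]; exact Finset.mem_union_right _ hlastE
    obtain ⟨t, htC, hte⟩ := Finset.mem_sup.mp hx
    rcases Finset.mem_insert.mp (hCF htC) with rfl | ht
    · exact htC
    · obtain ⟨i, _, rfl⟩ := Finset.mem_image.mp ht
      exact absurd hte (hlast_not i)
  refine ⟨claim1, ?_⟩
  -- the set of achievable cover sizes for the original instance is nonempty
  have hPne : {n | ∃ C, IsCover U (Finset.univ.image s) C ∧ C.card = n}.Nonempty := by
    refine ⟨(Finset.univ.image s).card, Finset.univ.image s,
      ⟨Finset.Subset.refl _, ?_⟩, rfl⟩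
    rw [Finset.sup_image]
    simpa using hU
  -- an optimal cover of the original instance
  obtain ⟨C, ⟨hCsubF, hCsup⟩, hCcard⟩ := Nat.sInf_mem hPne
  have hk : coverOPT U (Finset.univ.image s) = C.card := hCcard.symm
  -- build a cover of I' of size C.card + 1
  set A : Finset (Fin m) := Finset.univ.filter (fun i => s i ∈ C) with hA
  have hAC : A.image s = C := by
    apply Finset.Subset.antisymm
    · intro t ht
      obtain ⟨i, hi, rfl⟩ := Finset.mem_image.mp ht
      exact (Finset.mem_filter.mp hi).2
    · intro t ht
      obtain ⟨i, _, rfl⟩ := Finset.mem_image.mp (hCsubF ht)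
      exact Finset.mem_image_of_mem s (Finset.mem_filter.mpr ⟨Finset.mem_univ _, ht⟩)
  have hAcard : A.card = C.card := by
    rw [← hAC, Finset.card_image_of_injective _ hs]
  set C' : Finset (Finset α) := insert E (A.image s') with hC'
  have hEnotim : E ∉ A.image s' := by
    intro h
    obtain ⟨i, _, hi⟩ := Finset.mem_image.mp h
    exact hEnot i hi
  have hC'card : C'.card = C.card + 1 := by
    rw [hC', Finset.card_insert_of_notMem hEnotim,
      Finset.card_image_of_injective _ hs'inj, hAcard]
  have hC'cover : IsCover (U ∪ E) F' C' := by
    constructor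
    · exact Finset.insert_subset_insert _
        (Finset.image_subset_image (Finset.filter_subset _ _))
    · apply Finset.Subset.antisymm
      · intro x hx
        obtain ⟨t, htC', hxt⟩ := Finset.mem_sup.mp hx
        rcases Finset.mem_insert.mp htC' with rfl | ht
        · exact Finset.mem_union_right _ hxt
        · obtain ⟨i, _, rfl⟩ := Finset.mem_image.mp ht
          rcases Finset.mem_insert.mp hxt with rfl | hxs
          · exact Finset.mem_union_right _ (Finset.mem_image_of_mem e (Finset.mem_univ _))
          · exact Finset.mem_union_left _ (hsub i hxs)
      · intro x hx
        rcases Finset.mem_union.mp hx with hxU | hxE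
        · have : x ∈ C.sup id := hCsup ▸ hxU
          obtain ⟨t, htC, hxt⟩ := Finset.mem_sup.mp this
          have : t ∈ A.image s := hAC ▸ htC
          obtain ⟨i, hiA, rfl⟩ := Finset.mem_image.mp this
          exact Finset.mem_sup.mpr ⟨s' i,
            Finset.mem_insert_of_mem (Finset.mem_image_of_mem s' hiA),
            Finset.mem_insert_of_mem hxt⟩
        · exact Finset.mem_sup.mpr ⟨E, Finset.mem_insert_self _ _, hxE⟩
  -- upper bound and nonemptiness for I'
  have hP'ne : {n | ∃ D, IsCover (U ∪ E) F' D ∧ D.card = n}.Nonempty :=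
    ⟨C'.card, C', hC'cover, rfl⟩
  have hub : coverOPT (U ∪ E) F' ≤ C.card + 1 := by
    have := Nat.sInf_le (s := {n | ∃ D, IsCover (U ∪ E) F' D ∧ D.card = n})
      ⟨C', hC'cover, hC'card⟩
    exact this
  -- lower bound
  obtain ⟨D', ⟨hD'subF, hD'sup⟩, hD'card⟩ := Nat.sInf_mem hP'ne
  have hED' : E ∈ D' := claim1 D' ⟨hD'subF, hD'sup⟩
  set B : Finset (Fin m) := Finset.univ.filter (fun i => s' i ∈ D') with hB
  have hDcover : IsCover U (Finset.univ.image s) (B.image s) := by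
    constructor
    · exact Finset.image_subset_image (Finset.filter_subset _ _)
    · apply Finset.Subset.antisymm
      · intro x hx
        obtain ⟨t, htB, hxt⟩ := Finset.mem_sup.mp hx
        obtain ⟨i, _, rfl⟩ := Finset.mem_image.mp htB
        exact hsub i hxt
      · intro x hxU
        have : x ∈ D'.sup id := by
          rw [hD'sup]; exact Finset.mem_union_left _ hxU
        obtain ⟨t, htD, hxt⟩ := Finset.mem_sup.mp this
        rcases Finset.mem_insert.mp (hD'subF htD) with rfl | ht
        · obtain ⟨j, _, rfl⟩ := Finset.mem_image.mp hxt
          exact absurd hxU (hfresh j)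
        · obtain ⟨i, _, rfl⟩ := Finset.mem_image.mp ht
          rcases Finset.mem_insert.mp hxt with rfl | hxs
          · exact absurd hxU (hfresh _)
          · exact Finset.mem_sup.mpr ⟨s i,
              Finset.mem_image_of_mem s
                (Finset.mem_filter.mpr ⟨Finset.mem_univ _, htD⟩), hxs⟩
  have hBle : B.card ≤ D'.card - 1 := by
    have : B.card ≤ (D'.erase E).card := by
      apply Finset.card_le_card_of_injOn s'
      · intro i hi
        exact Finset.mem_erase.mpr ⟨hEnot i, (Finset.mem_filter.mp hi).2⟩
      · exact fun i _ j _ h => hs'inj h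
    simpa [Finset.card_erase_of_mem hED'] using this
  have hD'pos : 1 ≤ D'.card := Finset.card_pos.mpr ⟨E, hED'⟩
  have hlb : C.card + 1 ≤ coverOPT (U ∪ E) F' := by
    have h1 : coverOPT U (Finset.univ.image s) ≤ B.card :=
      Nat.sInf_le ⟨B.image s, hDcover, Finset.card_image_of_injective _ hs⟩
    rw [hk] at h1
    have : C.card + 1 ≤ (D'.card - 1) + 1 := by
      exact Nat.add_le_add_right (h1.trans hBle) 1
    rw [Nat.sub_add_cancel hD'pos] at this
    rw [show coverOPT (U ∪ E) F' = D'.card from hD'card.symm]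
    exact this
  rw [hk]
  exact le_antisymm hub hlb
end

section
/- Let (U, 𝒮) be a SetCover instance with finite universe U and with 𝒮 = {s_1, …, s_m} an enumeration of its m distinct sets, let e_1, …, e_{m+1} be m+1 distinct fresh elements not in U, and let E = {e_1, …, e_{m+1}}. For every subset V ⊆ U, consider the instance I_V with universe V ∪ E and family { (s_i ∩ V) ∪ {e_i} : i ∈ [m] } ∪ {E}. Then for every V ⊆ U, the sets of I_V are pairwise distinct, E ∪ (s_i ∩ V) ≠ (s_j ∩ V) ∪ {e_j} for i ≠ j, and OPT(I_V) ≤ OPT(U, 𝒮) + 1. -/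
open Finset

variable {α : Type*} [DecidableEq α]

/-- Let `𝒮 = {s_1, …, s_m}` (distinct sets, with union `U`), let `e_1, …, e_{m+1}` be
distinct fresh elements, and `E = {e_1, …, e_{m+1}}`.  For every `V ⊆ U`, in the instance
`I_V` with universe `V ∪ E` and family `{(s_i ∩ V) ∪ {e_i} : i ∈ [m]} ∪ {E}`:
the sets are pairwise distinct, `E ∪ (s_i ∩ V) ≠ (s_j ∩ V) ∪ {e_j}` for `i ≠ j`, and
`OPT(I_V) ≤ OPT(U, 𝒮) + 1`. -/
theorem stmt6 (m : ℕ) (s : Fin m → Finset α) (hs : Function.Injective s)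
    (U : Finset α) (hU : Finset.univ.sup s = U)
    (e : Fin (m + 1) → α) (he : Function.Injective e) (hfresh : ∀ i, e i ∉ U)
    (V : Finset α) (hV : V ⊆ U) :
    Function.Injective (fun i : Fin m => insert (e i.castSucc) (s i ∩ V)) ∧
    (∀ i : Fin m, insert (e i.castSucc) (s i ∩ V) ≠ Finset.univ.image e) ∧
    (∀ i j : Fin m, i ≠ j →
      Finset.univ.image e ∪ (s i ∩ V) ≠ insert (e j.castSucc) (s j ∩ V)) ∧
    coverOPT (V ∪ Finset.univ.image e)
        (insert (Finset.univ.image e)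
          (Finset.univ.image fun i : Fin m => insert (e i.castSucc) (s i ∩ V))) ≤
      coverOPT U (Finset.univ.image s) + 1 := by
  have hVU : ∀ i : Fin m, s i ∩ V ⊆ U := fun i => (inter_subset_right).trans hV
  have hnotmem : ∀ (j : Fin (m+1)) (i : Fin m), e j ∉ s i ∩ V := fun j i h =>
    hfresh j (hVU i h)
  refine ⟨?_, ?_, ?_, ?_⟩
  · intro i j h
    simp only at h
    have : e i.castSucc ∈ insert (e j.castSucc) (s j ∩ V) := h ▸ mem_insert_self _ _
    rcases mem_insert.1 this with h' | h'
    · exact Fin.castSucc_injective m (he h')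
    · exact absurd h' (hnotmem _ _)
  · intro i h
    have : e (Fin.last m) ∈ insert (e i.castSucc) (s i ∩ V) := by
      rw [h]; exact mem_image_of_mem e (mem_univ _)
    rcases mem_insert.1 this with h' | h'
    · exact (Fin.castSucc_lt_last i).ne' (he h')
    · exact hnotmem _ _ h'
  · intro i j hij h
    have : e i.castSucc ∈ insert (e j.castSucc) (s j ∩ V) := by
      rw [← h]; exact mem_union_left _ (mem_image_of_mem e (mem_univ _))
    rcases mem_insert.1 this with h' | h'
    · exact hij (Fin.castSucc_injective m (he h'))
    · exact hnotmem _ _ h'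
  · -- OPT bound
    set S : Set ℕ := {n | ∃ C, IsCover U (Finset.univ.image s) C ∧ C.card = n} with hS
    have hne : S.Nonempty := by
      refine ⟨(Finset.univ.image s).card, Finset.univ.image s, ⟨subset_rfl, ?_⟩, rfl⟩
      rw [sup_image]; simpa using hU
    have hmem := Nat.sInf_mem hne
    obtain ⟨C, hC, hCcard⟩ := hmem
    -- build a cover of the new instance
    set f : Fin m → Finset α := fun i => insert (e i.castSucc) (s i ∩ V) with hf
    set I : Finset (Fin m) := Finset.univ.filter (fun i => s i ∈ C) with hI
    set C' : Finset (Finset α) := insert (Finset.univ.image e) (I.image f) with hC'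
    have hcover : IsCover (V ∪ Finset.univ.image e)
        (insert (Finset.univ.image e) (Finset.univ.image f)) C' := by
      constructor
      · intro t ht
        rcases mem_insert.1 ht with rfl | ht
        · exact mem_insert_self _ _
        · obtain ⟨i, _, rfl⟩ := mem_image.1 ht
          exact mem_insert_of_mem (mem_image_of_mem f (mem_univ i))
      · apply le_antisymm
        · refine Finset.sup_le fun t ht => ?_
          rcases mem_insert.1 ht with rfl | ht
          · exact subset_union_right
          · obtain ⟨i, _, rfl⟩ := mem_image.1 ht
            intro x hx
            rcases mem_insert.1 hx with rfl | hx
            · exact mem_union_right _ (mem_image_of_mem e (mem_univ _))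
            · exact mem_union_left _ (mem_of_mem_inter_right hx)
        · intro x hx
          rcases mem_union.1 hx with hx | hx
          · have hxU : x ∈ U := hV hx
            rw [← hC.2] at hxU
            obtain ⟨t, htC, hxt⟩ := mem_sup.1 hxU
            obtain ⟨i, _, rfl⟩ := mem_image.1 (hC.1 htC)
            have hiI : i ∈ I := by simp [hI, htC]
            refine mem_sup.2 ⟨f i, mem_insert_of_mem (mem_image_of_mem f hiI), ?_⟩
            exact mem_insert_of_mem (mem_inter.2 ⟨hxt, hx⟩)
          · exact mem_sup.2 ⟨_, mem_insert_self _ _, hx⟩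
    have hcard : C'.card ≤ C.card + 1 := by
      calc C'.card ≤ (I.image f).card + 1 := card_insert_le _ _
        _ ≤ I.card + 1 := by gcongr; exact card_image_le
        _ ≤ C.card + 1 := by
            gcongr
            have : I.card = (I.image s).card := (card_image_of_injective I hs).symm
            rw [this]
            apply card_le_card
            intro t ht
            obtain ⟨i, hi, rfl⟩ := mem_image.1 ht
            exact (mem_filter.1 hi).2
    calc coverOPT (V ∪ Finset.univ.image e)
          (insert (Finset.univ.image e) (Finset.univ.image f))
        ≤ C'.card := Nat.sInf_le ⟨C', hcover, rfl⟩
      _ ≤ C.card + 1 := hcard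
      _ = coverOPT U (Finset.univ.image s) + 1 := by rw [hCcard]; rfl
end

section
/- Let (U, 𝒮') be a SetCover instance with finite universe U, let k = OPT(U, 𝒮'), and assume |𝒮'| ≥ 2k. For each s ∈ 𝒮' introduce a distinct fresh element e_s ∉ U, set U'' = U ∪ { e_s : s ∈ 𝒮' }, G = U'', R = { e_s : s ∈ 𝒮' }, and 𝒮'' = { s ∪ {e_s} : s ∈ 𝒮' } ∪ {G, R}, with weights w(G) = 2k, w(R) = k, and w(s ∪ {e_s}) = 1 for all s ∈ 𝒮'. Then every cover of the weighted instance (U'', 𝒮'', w) has total weight at least 2k, and {G} is a minimum-weight cover (of weight exactly 2k). -/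
open Finset

variable {α : Type*} [DecidableEq α]

/-- Let `k = OPT(U, 𝒮')` with `|𝒮'| ≥ 2k`.  With a distinct fresh element `e_s ∉ U` for each
`s ∈ 𝒮'`, universe `U'' = U ∪ {e_s}`, `G = U''`, `R = {e_s : s ∈ 𝒮'}`,
family `𝒮'' = {s ∪ {e_s} : s ∈ 𝒮'} ∪ {G, R}`, and weights `w(G) = 2k`, `w(R) = k`,
`w(s ∪ {e_s}) = 1`: every cover of `(U'', 𝒮'', w)` has total weight at least `2k`, and
`{G}` is a minimum-weight cover, of weight exactly `2k`. -/
theorem stmt10 (U : Finset α) (F : Finset (Finset α)) (hF : F.sup id = U)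
    (e : Finset α → α) (he : Set.InjOn e ↑F) (hfresh : ∀ s ∈ F, e s ∉ U)
    (hcard : 2 * coverOPT U F ≤ F.card)
    (w : Finset α → ℚ)
    (hwG : w (U ∪ F.image e) = 2 * (coverOPT U F : ℚ))
    (hwR : w (F.image e) = (coverOPT U F : ℚ))
    (hw1 : ∀ s ∈ F, w (insert (e s) s) = 1) :
    (∀ C, IsCover (U ∪ F.image e)
        (insert (U ∪ F.image e)
          (insert (F.image e) (F.image fun s => insert (e s) s))) C →
        2 * (coverOPT U F : ℚ) ≤ ∑ t ∈ C, w t) ∧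
    IsCover (U ∪ F.image e)
        (insert (U ∪ F.image e)
          (insert (F.image e) (F.image fun s => insert (e s) s)))
        {U ∪ F.image e} ∧
    ∑ t ∈ ({U ∪ F.image e} : Finset (Finset α)), w t = 2 * (coverOPT U F : ℚ) := by
  classical
  set k := coverOPT U F with hk
  have hsubU : ∀ t ∈ F, t ⊆ U := by
    intro t ht x hx
    have h := Finset.le_sup (f := id) ht
    rw [hF] at h
    exact h hx
  have hinj : Set.InjOn (fun s => insert (e s) s) ↑F := by
    intro s hs t ht h
    simp only at h
    have hes : e s ∈ insert (e t) t := h ▸ mem_insert_self _ _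
    rcases mem_insert.mp hes with h1 | h1
    · exact he hs ht h1
    · exact absurd (hsubU t ht h1) (hfresh s hs)
  have hsle : ∀ T, IsCover U F T → k ≤ T.card := fun T hT =>
    Nat.sInf_le ⟨T, hT, rfl⟩
  have hGcover : IsCover (U ∪ F.image e)
      (insert (U ∪ F.image e)
        (insert (F.image e) (F.image fun s => insert (e s) s)))
      {U ∪ F.image e} := by
    constructor
    · simp
    · simp
  have hsum : ∑ t ∈ ({U ∪ F.image e} : Finset (Finset α)), w t = 2 * (k : ℚ) := by
    simp [hwG]
  refine ⟨?_, hGcover, hsum⟩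
  intro C hC
  obtain ⟨hCsub, hCsup⟩ := hC
  have hmem : ∀ t ∈ C, t = U ∪ F.image e ∨ t = F.image e ∨ ∃ s ∈ F, t = insert (e s) s := by
    intro t ht
    have h := hCsub ht
    rcases mem_insert.mp h with h1 | h1
    · exact Or.inl h1
    rcases mem_insert.mp h1 with h2 | h2
    · exact Or.inr (Or.inl h2)
    · obtain ⟨s, hs, hse⟩ := mem_image.mp h2
      exact Or.inr (Or.inr ⟨s, hs, hse.symm⟩)
  rcases Nat.eq_zero_or_pos k with hk0 | hkpos
  · rw [hk0]
    push_cast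
    rw [mul_zero]
    apply Finset.sum_nonneg
    intro t ht
    rcases hmem t ht with rfl | rfl | ⟨s, hs, rfl⟩
    · rw [hwG, hk0]; norm_num
    · rw [hwR, hk0]; norm_num
    · rw [hw1 s hs]; norm_num
  · have hUne : U.Nonempty := by
      rw [Finset.nonempty_iff_ne_empty]
      intro hU
      have hcov : IsCover U F ∅ := ⟨Finset.empty_subset _, by simp [hU]⟩
      have := hsle ∅ hcov
      simp at this
      omega
    have hRne : ∀ s ∈ F, insert (e s) s ≠ F.image e := by
      intro s hs h
      obtain ⟨x, hx⟩ := hUne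
      have hsE : s = ∅ := by
        by_contra hne
        obtain ⟨y, hy⟩ := Finset.nonempty_iff_ne_empty.mpr hne
        have hy' : y ∈ F.image e := h ▸ (mem_insert_of_mem hy)
        obtain ⟨t, ht, hyt⟩ := mem_image.mp hy'
        exact hfresh t ht (hyt ▸ hsubU s hs hy)
      have hFs : F ⊆ {s} := by
        intro t ht
        have h2 : e t ∈ insert (e s) s := by rw [h]; exact mem_image_of_mem e ht
        rcases mem_insert.mp h2 with h1 | h1
        · exact mem_singleton.mpr (he ht hs h1)
        · exact absurd (hsubU s hs h1) (hfresh t ht)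
      have hx2 : x ∈ F.sup id := hF ▸ hx
      obtain ⟨t, ht, hxt⟩ := mem_sup.mp hx2
      have hts : t = s := mem_singleton.mp (hFs ht)
      rw [hts, hsE] at hxt
      exact absurd hxt (Finset.notMem_empty x)
    by_cases hG : (U ∪ F.image e) ∈ C
    · rw [← Finset.add_sum_erase C w hG, hwG]
      have hnn : (0:ℚ) ≤ ∑ t ∈ C.erase (U ∪ F.image e), w t := by
        apply Finset.sum_nonneg
        intro t ht
        obtain ⟨htne, htC⟩ := mem_erase.mp ht
        rcases hmem t htC with rfl | rfl | ⟨s, hs, rfl⟩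
        · exact absurd rfl htne
        · rw [hwR]; positivity
        · rw [hw1 s hs]; norm_num

      linarith
    · by_cases hR : F.image e ∈ C
      · set T := F.filter (fun s => insert (e s) s ∈ C) with hT
        have hTcover : IsCover U F T := by
          refine ⟨Finset.filter_subset _ _, ?_⟩
          apply le_antisymm
          · calc T.sup id ≤ F.sup id := Finset.sup_mono (Finset.filter_subset _ _)
              _ = U := hF
          · intro x hx
            have hxG : x ∈ C.sup id := by rw [hCsup]; exact mem_union_left _ hx
            obtain ⟨t, ht, hxt⟩ := mem_sup.mp hxG
            rcases hmem t ht with rfl | rfl | ⟨s, hs, rfl⟩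
            · exact absurd ht hG
            · obtain ⟨s, hs, hes⟩ := mem_image.mp hxt
              exact absurd (by rwa [hes]) (hfresh s hs)
            · rcases mem_insert.mp hxt with h1 | h1
              · exact absurd (h1 ▸ hx) (hfresh s hs)
              · exact mem_sup.mpr ⟨s, mem_filter.mpr ⟨hs, ht⟩, h1⟩
        have hTC : T.card ≤ (C.erase (F.image e)).card := by
          apply Finset.card_le_card_of_injOn (fun s => insert (e s) s)
          · intro s hs
            have hs' := mem_filter.mp hs
            exact mem_erase.mpr ⟨hRne s hs'.1, hs'.2⟩
          · exact hinj.mono (Finset.coe_subset.mpr (Finset.filter_subset _ _))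
        rw [← Finset.add_sum_erase C w hR, hwR]
        have hsum1 : ∑ t ∈ C.erase (F.image e), w t = ((C.erase (F.image e)).card : ℚ) := by
          have hone : ∀ t ∈ C.erase (F.image e), w t = 1 := by
            intro t ht
            obtain ⟨htne, htC⟩ := mem_erase.mp ht
            rcases hmem t htC with rfl | rfl | ⟨s, hs, rfl⟩
            · exact absurd htC hG
            · exact absurd rfl htne
            · exact hw1 s hs
          rw [Finset.sum_congr rfl hone, Finset.sum_const, nsmul_eq_mul, mul_one]
        rw [hsum1]
        have h1 : k ≤ (C.erase (F.image e)).card := le_trans (hsle T hTcover) hTC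
        have h2 : (k:ℚ) ≤ ((C.erase (F.image e)).card : ℚ) := by exact_mod_cast h1
        linarith
      · have himg : F.image (fun s => insert (e s) s) ⊆ C := by
          intro t ht
          obtain ⟨s, hs, rfl⟩ := mem_image.mp ht
          have hes : e s ∈ C.sup id := by
            rw [hCsup]; exact mem_union_right _ (mem_image_of_mem e hs)
          obtain ⟨t', ht', hxt⟩ := mem_sup.mp hes
          rcases hmem t' ht' with rfl | rfl | ⟨s', hs', rfl⟩
          · exact absurd ht' hG
          · exact absurd ht' hR
          · rcases mem_insert.mp hxt with h1 | h1
            · rw [he hs hs' h1]; exact ht'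
            · exact absurd (hsubU s' hs' h1) (hfresh s hs)
        have hCimg : C = F.image (fun s => insert (e s) s) := by
          apply Finset.Subset.antisymm _ himg
          intro t ht
          rcases hmem t ht with rfl | rfl | ⟨s, hs, rfl⟩
          · exact absurd ht hG
          · exact absurd ht hR
          · exact mem_image_of_mem _ hs
        rw [hCimg, Finset.sum_image (fun s hs t ht h => hinj hs ht h)]
        rw [Finset.sum_congr rfl (fun s hs => hw1 s hs), Finset.sum_const, nsmul_eq_mul, mul_one]
        have h2 : ((2 * k : ℕ) : ℚ) ≤ (F.card : ℚ) := by exact_mod_cast hcard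
        push_cast at h2

        linarith
end

section
/- Let (U, 𝒮') be a SetCover instance with finite universe U and let k = OPT(U, 𝒮'). For each s ∈ 𝒮' introduce a distinct fresh element e_s ∉ U, let e_new be a further fresh element, set G = U ∪ { e_s : s ∈ 𝒮' }, R' = { e_s : s ∈ 𝒮' } ∪ {e_new}, and consider the weighted instance I* with universe U ∪ { e_s : s ∈ 𝒮' } ∪ {e_new} and family { s ∪ {e_s} : s ∈ 𝒮' } ∪ {G, R'}, with weights w(G) = 2k, w(R') = k, and w(s ∪ {e_s}) = 1 for all s ∈ 𝒮'. Then: (i) every cover of I* contains R'; (ii) the minimum total weight of a cover of I* equals 2k; and (iii) every cover of I* that contains G has total weight at least 3k. -/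
open Finset

variable {α : Type*} [DecidableEq α]

/-- Let `k = OPT(U, 𝒮')`.  With a distinct fresh element `e_s ∉ U` for each `s ∈ 𝒮'`, another
fresh element `e_new`, `G = U ∪ {e_s : s ∈ 𝒮'}`, `R' = {e_s : s ∈ 𝒮'} ∪ {e_new}`, the
instance `I*` with universe `U ∪ {e_s : s ∈ 𝒮'} ∪ {e_new}`, family
`{s ∪ {e_s} : s ∈ 𝒮'} ∪ {G, R'}`, and weights `w(G) = 2k`, `w(R') = k`, `w(s ∪ {e_s}) = 1`:
(i) every cover of `I*` contains `R'`; (ii) the minimum total weight of a cover of `I*`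
equals `2k`; (iii) every cover containing `G` has total weight at least `3k`. -/
theorem stmt11 (U : Finset α) (F : Finset (Finset α)) (hF : F.sup id = U)
    (e : Finset α → α) (he : Set.InjOn e ↑F) (hfresh : ∀ s ∈ F, e s ∉ U)
    (enew : α) (henew : enew ∉ U) (henew' : ∀ s ∈ F, enew ≠ e s)
    (w : Finset α → ℚ)
    (hwG : w (U ∪ F.image e) = 2 * (coverOPT U F : ℚ))
    (hwR : w (insert enew (F.image e)) = (coverOPT U F : ℚ))
    (hw1 : ∀ s ∈ F, w (insert (e s) s) = 1) :
    (∀ C, IsCover (insert enew (U ∪ F.image e))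
        (insert (U ∪ F.image e)
          (insert (insert enew (F.image e)) (F.image fun s => insert (e s) s))) C →
        insert enew (F.image e) ∈ C) ∧
    ((∃ C, IsCover (insert enew (U ∪ F.image e))
        (insert (U ∪ F.image e)
          (insert (insert enew (F.image e)) (F.image fun s => insert (e s) s))) C ∧
        ∑ t ∈ C, w t = 2 * (coverOPT U F : ℚ)) ∧
      (∀ C, IsCover (insert enew (U ∪ F.image e))
        (insert (U ∪ F.image e)
          (insert (insert enew (F.image e)) (F.image fun s => insert (e s) s))) C →
        2 * (coverOPT U F : ℚ) ≤ ∑ t ∈ C, w t)) ∧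
    (∀ C, IsCover (insert enew (U ∪ F.image e))
        (insert (U ∪ F.image e)
          (insert (insert enew (F.image e)) (F.image fun s => insert (e s) s))) C →
        (U ∪ F.image e) ∈ C → 3 * (coverOPT U F : ℚ) ≤ ∑ t ∈ C, w t) := by

  classical
  set k := coverOPT U F with hk
  set G := U ∪ F.image e with hGdef
  set R := insert enew (F.image e) with hRdef
  set g : Finset α → Finset α := fun s => insert (e s) s with hgdef
  set Fam := insert G (insert R (F.image g)) with hFamdef
  set V := insert enew G with hVdef
  have hsub : ∀ s ∈ F, s ⊆ U := fun s hs => hF ▸ Finset.le_sup (f := id) hs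
  have henewG : enew ∉ G := by
    rw [hGdef]
    simp only [Finset.mem_union, Finset.mem_image, not_or, not_exists]
    exact ⟨henew, by push_neg; intro s hs h; exact henew' s hs h.symm⟩
  have henewR : ∀ t ∈ Fam, enew ∈ t → t = R := by
    intro t ht hte
    rw [hFamdef, Finset.mem_insert, Finset.mem_insert, Finset.mem_image] at ht
    rcases ht with rfl | rfl | ⟨s, hs, rfl⟩
    · exact absurd hte henewG
    · rfl
    · rw [hgdef] at hte
      simp only [Finset.mem_insert] at hte
      rcases hte with h | h
      · exact absurd h (henew' s hs)
      · exact absurd (hsub s hs h) henew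
  have hRU : ∀ u ∈ U, u ∉ R := by
    intro u hu hmem
    rw [hRdef, Finset.mem_insert, Finset.mem_image] at hmem
    rcases hmem with rfl | ⟨s, hs, rfl⟩
    · exact henew hu
    · exact hfresh s hs hu
  have hginj : ∀ s ∈ F, ∀ s' ∈ F, g s = g s' → s = s' := by
    intro s hs s' hs' hgs
    have hgs' : insert (e s) s = insert (e s') s' := hgs
    have h1 : e s ∈ insert (e s') s' := by rw [← hgs']; exact Finset.mem_insert_self _ _
    rcases Finset.mem_insert.1 h1 with h | h
    · exact he hs hs' h
    · exact absurd (hsub s' hs' h) (hfresh s hs)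
  have hRnotim : R ∉ F.image g := by
    intro h
    obtain ⟨s, hs, hgs⟩ := Finset.mem_image.1 h
    have : enew ∈ g s := by rw [hgs, hRdef]; exact Finset.mem_insert_self _ _
    rw [hgdef] at this
    rcases Finset.mem_insert.1 this with h' | h'
    · exact henew' s hs h'
    · exact henew (hsub s hs h')
  have hGneR : G ≠ R := by
    intro h
    exact henewG (h ▸ Finset.mem_insert_self _ _)
  have hwim : ∀ t ∈ F.image g, w t = 1 := by
    intro t ht
    obtain ⟨s, hs, rfl⟩ := Finset.mem_image.1 ht
    exact hw1 s hs
  -- membership in Fam minus G and R is in the image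
  have hFam3 : ∀ t ∈ Fam, t ≠ G → t ≠ R → t ∈ F.image g := by
    intro t ht h1 h2
    rw [hFamdef, Finset.mem_insert, Finset.mem_insert] at ht
    rcases ht with rfl | rfl | h
    · exact absurd rfl h1
    · exact absurd rfl h2
    · exact h
  -- part (i)
  have part1 : ∀ C, IsCover V Fam C → R ∈ C := by
    intro C hC
    have h1 : enew ∈ C.sup id := hC.2.symm ▸ Finset.mem_insert_self _ _
    rw [Finset.mem_sup] at h1
    obtain ⟨t, htC, hte⟩ := h1
    have := henewR t (hC.1 htC) hte
    rwa [this] at htC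
  -- opt is attained
  have hkmem : k ∈ {n | ∃ C, IsCover U F C ∧ C.card = n} :=
    Nat.sInf_mem ⟨F.card, F, ⟨Finset.Subset.refl F, hF⟩, rfl⟩
  obtain ⟨C₀, hC₀, hC₀card⟩ := hkmem
  -- lower bound when G ∈ C (part iii)
  have part3 : ∀ C, IsCover V Fam C → G ∈ C → 3 * (k:ℚ) ≤ ∑ t ∈ C, w t := by
    intro C hC hGC
    have hRC := part1 C hC
    have hGC' : G ∈ C.erase R := Finset.mem_erase.2 ⟨hGneR, hGC⟩
    have hsum1 : ∑ t ∈ C, w t = w R + ∑ t ∈ C.erase R, w t :=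
      (Finset.add_sum_erase _ _ hRC).symm
    have hsum2 : ∑ t ∈ C.erase R, w t = w G + ∑ t ∈ (C.erase R).erase G, w t :=
      (Finset.add_sum_erase _ _ hGC').symm
    have hrest : 0 ≤ ∑ t ∈ (C.erase R).erase G, w t := by
      apply Finset.sum_nonneg
      intro t ht
      have h1 := Finset.mem_erase.1 ht
      have h2 := Finset.mem_erase.1 h1.2
      have := hwim t (hFam3 t (hC.1 h2.2) h1.1 h2.1)
      rw [this]; norm_num
    have hk0 : (0:ℚ) ≤ (k:ℚ) := Nat.cast_nonneg k
    rw [hsum1, hsum2, hwR, hwG]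
    linarith
  -- lower bound in general (part ii, lower)
  have part2low : ∀ C, IsCover V Fam C → 2 * (k:ℚ) ≤ ∑ t ∈ C, w t := by
    intro C hC
    by_cases hGC : G ∈ C
    · have := part3 C hC hGC
      have hk0 : (0:ℚ) ≤ (k:ℚ) := Nat.cast_nonneg k
      linarith
    · have hRC := part1 C hC
      have hsub' : C.erase R ⊆ F.image g := by
        intro t ht
        have h1 := Finset.mem_erase.1 ht
        exact hFam3 t (hC.1 h1.2) (fun h => hGC (h ▸ h1.2)) h1.1
      set D := F.filter (fun s => g s ∈ C.erase R) with hDdef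
      have hDcover : IsCover U F D := by
        constructor
        · exact Finset.filter_subset _ _
        · apply Finset.Subset.antisymm
          · exact Finset.sup_le fun s hs => hsub s (Finset.filter_subset _ _ hs)
          · intro u hu
            have huV : u ∈ V := by
              rw [hVdef, hGdef]
              exact Finset.mem_insert_of_mem (Finset.mem_union_left _ hu)
            have h1 : u ∈ C.sup id := hC.2.symm ▸ huV
            rw [Finset.mem_sup] at h1
            obtain ⟨t, htC, hut⟩ := h1
            have htR : t ≠ R := fun h => hRU u hu (h ▸ hut)
            have htim : t ∈ F.image g :=
              hFam3 t (hC.1 htC) (fun h => hGC (h ▸ htC)) htR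
            obtain ⟨s, hsF, rfl⟩ := Finset.mem_image.1 htim
            have hus : u ∈ s := by
              rw [hgdef] at hut
              rcases Finset.mem_insert.1 hut with h | h
              · exact absurd (h ▸ hu) (hfresh s hsF)
              · exact h
            have hsD : s ∈ D := Finset.mem_filter.2 ⟨hsF, Finset.mem_erase.2 ⟨htR, htC⟩⟩
            exact Finset.le_sup (f := id) hsD hus
      have hkD : k ≤ D.card := Nat.sInf_le ⟨D, hDcover, rfl⟩
      have himD : D.image g ⊆ C.erase R := by
        intro t ht
        obtain ⟨s, hs, rfl⟩ := Finset.mem_image.1 ht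
        exact (Finset.mem_filter.1 hs).2
      have hDcard : D.card = (D.image g).card := by
        rw [Finset.card_image_of_injOn]
        intro s hs s' hs' h
        exact hginj s (Finset.filter_subset _ _ hs) s' (Finset.filter_subset _ _ hs') h
      have hkcard : k ≤ (C.erase R).card :=
        le_trans hkD (hDcard ▸ Finset.card_le_card himD)
      have hsum1 : ∑ t ∈ C, w t = w R + ∑ t ∈ C.erase R, w t :=
        (Finset.add_sum_erase _ _ hRC).symm
      have hsum2 : ∑ t ∈ C.erase R, w t = ((C.erase R).card : ℚ) := by
        rw [Finset.sum_congr rfl (fun t ht => hwim t (hsub' ht))]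
        simp
      rw [hsum1, hsum2, hwR]
      have : (k:ℚ) ≤ ((C.erase R).card : ℚ) := by exact_mod_cast hkcard
      linarith
  -- existence of a cover of weight 2k
  have hexists : ∃ C, IsCover V Fam C ∧ ∑ t ∈ C, w t = 2 * (k:ℚ) := by
    refine ⟨insert R (C₀.image g), ⟨?_, ?_⟩, ?_⟩
    · rw [Finset.insert_subset_iff]
      constructor
      · rw [hFamdef]; exact Finset.mem_insert_of_mem (Finset.mem_insert_self _ _)
      · intro t ht
        rw [hFamdef]
        exact Finset.mem_insert_of_mem (Finset.mem_insert_of_mem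
          (Finset.image_subset_image hC₀.1 ht))
    · apply Finset.Subset.antisymm
      · show (insert R (C₀.image g)).sup id ≤ V
        apply Finset.sup_le
        intro t ht
        rcases Finset.mem_insert.1 ht with rfl | ht
        · rw [hRdef, hVdef]
          exact Finset.insert_subset_insert _ (hGdef ▸ Finset.subset_union_right)
        · obtain ⟨s, hs, rfl⟩ := Finset.mem_image.1 ht
          have hsF : s ∈ F := hC₀.1 hs
          rw [hgdef, hVdef]
          apply Finset.insert_subset_iff.2
          constructor
          · exact Finset.mem_insert_of_mem (hGdef ▸ Finset.mem_union_right _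
              (Finset.mem_image_of_mem e hsF))
          · exact ((hsub s hsF).trans (hGdef ▸ Finset.subset_union_left)).trans
              (Finset.subset_insert _ _)
      · intro x hx
        rw [Finset.mem_sup]
        rw [hVdef, Finset.mem_insert] at hx
        rcases hx with rfl | hx
        · exact ⟨R, Finset.mem_insert_self _ _, hRdef ▸ Finset.mem_insert_self _ _⟩
        · rw [hGdef, Finset.mem_union] at hx
          rcases hx with hx | hx
          · have : x ∈ C₀.sup id := hC₀.2.symm ▸ hx
            rw [Finset.mem_sup] at this
            obtain ⟨s, hs, hxs⟩ := this
            exact ⟨g s, Finset.mem_insert_of_mem (Finset.mem_image_of_mem g hs),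
              by rw [hgdef]; exact Finset.mem_insert_of_mem hxs⟩
          · exact ⟨R, Finset.mem_insert_self _ _,
              hRdef ▸ Finset.mem_insert_of_mem hx⟩
    · have hRnot : R ∉ C₀.image g := fun h => hRnotim (Finset.image_subset_image hC₀.1 h)
      rw [Finset.sum_insert hRnot, hwR]
      have : ∑ t ∈ C₀.image g, w t = ∑ s ∈ C₀, w (g s) := by
        rw [Finset.sum_image]
        intro s hs s' hs' h
        exact hginj s (hC₀.1 hs) s' (hC₀.1 hs') h
      rw [this, Finset.sum_congr rfl (fun s hs => hw1 s (hC₀.1 hs))]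
      simp [hC₀card]
      ring
  exact ⟨part1, ⟨hexists, part2low⟩, part3⟩
end

section
/- Let (U, 𝒮') be a SetCover instance with finite universe U and let k = OPT(U, 𝒮'). For each s ∈ 𝒮' introduce a distinct fresh element e_s ∉ U, let e_new be a further fresh element, set G = U ∪ { e_s : s ∈ 𝒮' }, R' = { e_s : s ∈ 𝒮' } ∪ {e_new}, and consider the weighted instance I* with universe U ∪ { e_s : s ∈ 𝒮' } ∪ {e_new} and family { s ∪ {e_s} : s ∈ 𝒮' } ∪ {G, R'}, with weights w(G) = 2k, w(R') = k, and w(s ∪ {e_s}) = 1 for all s ∈ 𝒮'. If T is a cover of I* of total weight strictly less than 3k, then G ∉ T, and the family { s ∈ 𝒮' : s ∪ {e_s} ∈ T } is a cover of (U, 𝒮') of cardinality strictly less than 2k = 2 · OPT(U, 𝒮'). -/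
open Finset

variable {α : Type*} [DecidableEq α]

/-- In the instance `I*` of the previous construction (with `k = OPT(U, 𝒮')`): if `T` is a
cover of `I*` of total weight strictly less than `3k`, then `G ∉ T` and
`{s ∈ 𝒮' : s ∪ {e_s} ∈ T}` is a cover of `(U, 𝒮')` of cardinality strictly less than
`2k = 2 · OPT(U, 𝒮')`. -/
theorem stmt12 (U : Finset α) (F : Finset (Finset α)) (hF : F.sup id = U)
    (e : Finset α → α) (he : Set.InjOn e ↑F) (hfresh : ∀ s ∈ F, e s ∉ U)
    (enew : α) (henew : enew ∉ U) (henew' : ∀ s ∈ F, enew ≠ e s)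
    (w : Finset α → ℚ)
    (hwG : w (U ∪ F.image e) = 2 * (coverOPT U F : ℚ))
    (hwR : w (insert enew (F.image e)) = (coverOPT U F : ℚ))
    (hw1 : ∀ s ∈ F, w (insert (e s) s) = 1)
    (T : Finset (Finset α))
    (hT : IsCover (insert enew (U ∪ F.image e))
        (insert (U ∪ F.image e)
          (insert (insert enew (F.image e)) (F.image fun s => insert (e s) s))) T)
    (hTw : ∑ t ∈ T, w t < 3 * (coverOPT U F : ℚ)) :
    (U ∪ F.image e) ∉ T ∧
    IsCover U F (F.filter fun s => insert (e s) s ∈ T) ∧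
    (F.filter fun s => insert (e s) s ∈ T).card < 2 * coverOPT U F := by
  classical
  obtain ⟨hTsub, hTsup⟩ := hT
  set k : ℕ := coverOPT U F with hk
  set G : Finset α := U ∪ F.image e with hG
  set R : Finset α := insert enew (F.image e) with hR
  have hsU : ∀ s ∈ F, s ⊆ U := by
    intro s hs
    rw [← hF]
    exact le_sup (f := id) hs
  have henewG : enew ∉ G := by
    simp only [hG, mem_union, mem_image]
    rintro (h | ⟨s, hs, h⟩)
    · exact henew h
    · exact henew' s hs h.symm
  have henewS : ∀ s ∈ F, enew ∉ insert (e s) s := by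
    intro s hs h
    rcases mem_insert.mp h with h | h
    · exact henew' s hs h
    · exact henew (hsU s hs h)
  have hGR : G ≠ R := fun h => henewG (h ▸ mem_insert_self _ _)
  have hclass : ∀ t ∈ T, t = G ∨ t = R ∨ ∃ s ∈ F, t = insert (e s) s := by
    intro t ht
    have := hTsub ht
    simp only [mem_insert, mem_image] at this
    rcases this with h | h | ⟨s, hs, h⟩
    · exact Or.inl h
    · exact Or.inr (Or.inl h)
    · exact Or.inr (Or.inr ⟨s, hs, h.symm⟩)
  have hRT : R ∈ T := by
    have hmem : enew ∈ T.sup id := by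
      rw [hTsup]; exact mem_insert_self _ _
    obtain ⟨t, ht, hmemt⟩ := mem_sup.mp hmem
    rcases hclass t ht with rfl | rfl | ⟨s, hs, rfl⟩
    · exact absurd hmemt henewG
    · exact ht
    · exact absurd hmemt (henewS s hs)
  have hGT : G ∉ T := by
    intro hGT
    have hRT' : R ∈ T.erase G := mem_erase.mpr ⟨hGR.symm, hRT⟩
    have h0 : (0 : ℚ) ≤ ∑ t ∈ (T.erase G).erase R, w t := by
      apply Finset.sum_nonneg
      intro t ht
      have htT : t ∈ T := mem_of_mem_erase (mem_of_mem_erase ht)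
      rcases hclass t htT with rfl | rfl | ⟨s, hs, rfl⟩
      · exact absurd rfl (mem_erase.mp (mem_of_mem_erase ht)).1
      · exact absurd rfl (mem_erase.mp ht).1
      · rw [hw1 s hs]; norm_num
    have e1 : ∑ t ∈ T, w t = w G + (w R + ∑ t ∈ (T.erase G).erase R, w t) := by
      rw [Finset.add_sum_erase _ w hRT', Finset.add_sum_erase _ w hGT]
    rw [e1, hwG, hwR] at hTw
    linarith
  have hinj : Set.InjOn (fun s => insert (e s) s) ↑F := by
    intro s hs s' hs' h
    simp only at h
    have : e s ∈ insert (e s') s' := h ▸ mem_insert_self _ _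
    rcases mem_insert.mp this with h' | h'
    · exact he hs hs' h'
    · exact absurd (hsU s' hs' h') (hfresh s hs)
  set C : Finset (Finset α) := F.filter (fun s => insert (e s) s ∈ T) with hC
  have hmap : ∀ s ∈ C, insert (e s) s ∈ T.erase R := by
    intro s hs
    rw [hC, mem_filter] at hs
    refine mem_erase.mpr ⟨?_, hs.2⟩
    intro h
    exact henewS s hs.1 (h ▸ mem_insert_self enew (F.image e))
  have hcard : C.card ≤ (T.erase R).card := by
    apply Finset.card_le_card_of_injOn _ hmap
    exact hinj.mono (by rw [hC]; exact_mod_cast Finset.filter_subset _ _)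
  have hsum : ∑ t ∈ T.erase R, w t = ((T.erase R).card : ℚ) := by
    rw [Finset.card_eq_sum_ones]
    push_cast
    apply Finset.sum_congr rfl
    intro t ht
    have htT : t ∈ T := mem_of_mem_erase ht
    rcases hclass t htT with rfl | rfl | ⟨s, hs, rfl⟩
    · exact absurd htT hGT
    · exact absurd rfl (mem_erase.mp ht).1
    · exact hw1 s hs
  have e2 : ∑ t ∈ T, w t = w R + ∑ t ∈ T.erase R, w t :=
    (Finset.add_sum_erase _ w hRT).symm
  rw [e2, hwR, hsum] at hTw
  have hClt : (C.card : ℚ) < 2 * (k : ℚ) := by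
    have : ((C.card : ℚ)) ≤ ((T.erase R).card : ℚ) := by exact_mod_cast hcard
    linarith
  have hCltn : C.card < 2 * k := by exact_mod_cast hClt
  refine ⟨hGT, ⟨Finset.filter_subset _ _, ?_⟩, hCltn⟩
  apply le_antisymm
  · apply Finset.sup_le
    intro s hs
    exact hsU s (mem_filter.mp hs).1
  · intro u hu
    have hmem : u ∈ T.sup id := by
      rw [hTsup]
      exact mem_insert_of_mem (mem_union_left _ hu)
    obtain ⟨t, ht, hmemt⟩ := mem_sup.mp hmem
    rcases hclass t ht with rfl | rfl | ⟨s, hs, rfl⟩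
    · exact absurd ht hGT
    · rcases mem_insert.mp hmemt with h | h
      · exact absurd (h ▸ hu) henew
      · obtain ⟨s, hs, h⟩ := mem_image.mp h
        exact absurd (h ▸ hu) (hfresh s hs)
    · rcases mem_insert.mp hmemt with h | h
      · exact absurd (h ▸ hu) (hfresh s hs)
      · exact mem_sup.mpr ⟨s, mem_filter.mpr ⟨hs, ht⟩, h⟩
end
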